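/- arXiv:2401.09152 — 3 statements merged into one kernel-verified Lean document; each statement's English description precedes it below -/
import Mathlib

section
/- Let P be a zig-zag collection supported by intervals I₁, …, I_ℓ (so consecutive intervals meet in exactly one corner vertex, I₁ and I_ℓ meet in one vertex, the meeting vertices v_i, v_{i+1} of each I_i lie on a common edge interval, and non-consecutive intervals are disjoint). Then ℓ is even. -/
/-- The vertex `v` is a diagonal corner of the interval `[a,b]` of `ℤ²`. -/
def IsDiagCorner (a b v : ℤ × ℤ) : Prop := v = a ∨ v = b

/-- The vertex `v` is an anti-diagonal corner of the interval `[a,b]` of `ℤ²`. -/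
def IsAntiDiagCorner (a b v : ℤ × ℤ) : Prop := v = (a.1, b.2) ∨ v = (b.1, a.2)

/-!
Call `v i` diagonal or anti-diagonal according to the kind of corner it is of `I i`, the
interval it begins. Two proper intervals meeting in a single point meet corner to corner,
at a corner of the same kind of both; and each `I i` has one meeting vertex of each kind.
So the kind of `v i` in `I i` alternates around the cycle, which forces `ℓ` to be even.
-/

theorem even_of_forall_add_one_iff_not {α : Type*} [AddMonoidWithOne α] {p : α → Prop}
    (hp : ∀ x, p (x + 1) ↔ ¬ p x) {n : ℕ} (hn : (n : α) = 0) : Even n := by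
  have alternate : ∀ k : ℕ, p k ↔ (p 0 ↔ Even k) := by
    intro k
    induction k with
    | zero => simp
    | succ k ih => rw [Nat.cast_succ, hp, ih, Nat.even_add_one]; tauto
  have closed := alternate n
  rw [hn] at closed
  tauto

section Corners

variable {a b a' b' w : ℤ × ℤ}

theorem IsAntiDiagCorner.not_isDiagCorner (hab : a.1 < b.1 ∧ a.2 < b.2)
    (h : IsAntiDiagCorner a b w) : ¬ IsDiagCorner a b w := by
  unfold IsAntiDiagCorner at h
  unfold IsDiagCorner
  rcases h with rfl | rfl <;> simp only [Prod.ext_iff] <;> omega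

theorem isDiagCorner_iff_of_Icc_inter_Icc_eq_singleton (hab : a.1 < b.1 ∧ a.2 < b.2)
    (hab' : a'.1 < b'.1 ∧ a'.2 < b'.2) (h : Set.Icc a b ∩ Set.Icc a' b' = {w}) :
    IsDiagCorner a b w ↔ IsDiagCorner a' b' w := by
  rw [Set.Icc_inter_Icc, Set.Icc_eq_singleton_iff, Prod.ext_iff, Prod.ext_iff] at h
  simp only [Prod.fst_sup, Prod.snd_sup, Prod.fst_inf, Prod.snd_inf] at h
  -- `a ⊔ a' = w = b ⊓ b'`, so by properness each coordinate of `w` is the lower end of one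
  -- interval and the upper end of the other.
  unfold IsDiagCorner
  simp only [Prod.ext_iff]
  omega

end Corners

theorem zigzag_collection_even_length_general (ℓ : ℕ) [NeZero ℓ]
    (a b : Fin ℓ → ℤ × ℤ) (v : Fin ℓ → ℤ × ℤ)
    (I : Fin ℓ → Set (ℤ × ℤ))
    (hI : ∀ i, I i = Set.Icc (a i) (b i))
    (hproper : ∀ i, (a i).1 < (b i).1 ∧ (a i).2 < (b i).2)
    (hmeet : ∀ i : Fin ℓ, I i ∩ I (i + 1) = {v (i + 1)})
    (hcorners : ∀ i : Fin ℓ,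
      (IsDiagCorner (a i) (b i) (v i) ∧ IsAntiDiagCorner (a i) (b i) (v (i + 1))) ∨
      (IsAntiDiagCorner (a i) (b i) (v i) ∧ IsDiagCorner (a i) (b i) (v (i + 1)))) :
    Even ℓ := by
  open Fin.NatCast in
  refine even_of_forall_add_one_iff_not (p := fun i => IsDiagCorner (a i) (b i) (v i))
    (fun i => ?_) (Fin.natCast_self ℓ)
  have hi := hmeet i
  rw [hI, hI] at hi
  rw [← isDiagCorner_iff_of_Icc_inter_Icc_eq_singleton (hproper i) (hproper (i + 1)) hi]
  rcases hcorners i with ⟨hdiag, hanti⟩ | ⟨hanti, hdiag⟩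
  · exact iff_of_false (hanti.not_isDiagCorner (hproper i)) (not_not_intro hdiag)
  · exact iff_of_true hdiag (hanti.not_isDiagCorner (hproper i))

/-- In a zig-zag collection supported by proper intervals `I 0, …, I (ℓ-1)` of `ℤ²`
(indices taken cyclically, so that `I (ℓ-1) ∩ I 0 = {v 0}` encodes `I₁ ∩ I_ℓ = {v₁}`):
consecutive intervals meet in exactly one vertex, the two meeting vertices of each
interval are one diagonal and one anti-diagonal corner of it lying on a common
horizontal or vertical edge line, and non-consecutive intervals are disjoint.
Then `ℓ` is even. -/
theorem zigzag_collection_even_length (ℓ : ℕ) (hℓ : 2 ≤ ℓ) [NeZero ℓ]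
    (a b : Fin ℓ → ℤ × ℤ) (v : Fin ℓ → ℤ × ℤ)
    (I : Fin ℓ → Set (ℤ × ℤ))
    (hI : ∀ i, I i = Set.Icc (a i) (b i))
    (hproper : ∀ i, (a i).1 < (b i).1 ∧ (a i).2 < (b i).2)
    (hdistinct : Function.Injective I)
    (hmeet : ∀ i : Fin ℓ, I i ∩ I (i + 1) = {v (i + 1)})
    (hcorners : ∀ i : Fin ℓ,
      (IsDiagCorner (a i) (b i) (v i) ∧ IsAntiDiagCorner (a i) (b i) (v (i + 1))) ∨
      (IsAntiDiagCorner (a i) (b i) (v i) ∧ IsDiagCorner (a i) (b i) (v (i + 1))))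
    (hedge : ∀ i : Fin ℓ, (v i).1 = (v (i + 1)).1 ∨ (v i).2 = (v (i + 1)).2)
    (hdisjoint : ∀ i j : Fin ℓ, j ≠ i → j ≠ i + 1 → i ≠ j + 1 → I i ∩ I j = ∅) :
    Even ℓ :=
  zigzag_collection_even_length_general ℓ a b v I hI hproper hmeet hcorners
end

section
/- Let f = x_a x_b − x_c x_d and g = x_b x_β − x_γ x_δ be binomials in a polynomial ring over a field (all six variables a, c, d, β, γ, δ distinct from each other and from b), with a chosen monomial order for which in(f) = x_a x_b and in(g) = x_b x_β. Then the S-polynomial S(f,g) equals ±(x_a x_γ x_δ − x_β x_c x_d), and if S(f,g) reduces to 0 modulo a set G of quadratic binomials, then the initial monomial of S(f,g) is divisible by the initial monomial of some element of G that involves at most the variables {a, γ, δ} or {β, c, d}. -/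
open MvPolynomial

variable {σ : Type*} {K : Type*} [Field K]

/-- `e` is the exponent of the initial (leading) monomial of `f` w.r.t. the monomial
order `m`. -/
def IsLeadExp (m : MonomialOrder σ) (f : MvPolynomial σ K) (e : σ →₀ ℕ) : Prop :=
  e ∈ f.support ∧ ∀ e' ∈ f.support, m.toSyn e' ≤ m.toSyn e

/-- `h` reduces to `0` modulo `G` w.r.t. `m`: it has a standard expression
`h = ∑ qᵢ gᵢ` with `gᵢ ∈ G` and each `in(qᵢ gᵢ) ≼ in(h)`. -/
def ReducesToZero (m : MonomialOrder σ) (G : Set (MvPolynomial σ K))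
    (h : MvPolynomial σ K) : Prop :=
  ∃ (N : ℕ) (g : Fin N → MvPolynomial σ K) (q : Fin N → MvPolynomial σ K),
    (∀ i, g i ∈ G) ∧ h = ∑ i, q i * g i ∧
    ∀ i, ∀ ei, IsLeadExp m (q i * g i) ei →
      ∀ D, IsLeadExp m h D → m.toSyn ei ≤ m.toSyn D

theorem isLeadExp_iff {m : MonomialOrder σ} {f : MvPolynomial σ K} {e : σ →₀ ℕ} :
    IsLeadExp m f e ↔ f ≠ 0 ∧ m.degree f = e := by
  constructor
  · rintro ⟨he, hmax⟩
    have hf : f ≠ 0 := ne_zero_iff.mpr ⟨_, mem_support_iff.mp he⟩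
    exact ⟨hf, m.toSyn.injective
      (le_antisymm (hmax _ (m.degree_mem_support hf)) (m.le_degree he))⟩
  · rintro ⟨hf, rfl⟩
    exact ⟨m.degree_mem_support hf, fun _ => m.le_degree⟩

/-- The monomial `in(h)` lies in the support of some `qᵢ gᵢ`; the standard expression forces
it to be `in(qᵢ gᵢ) = in(qᵢ) + in(gᵢ)`. -/
theorem ReducesToZero.exists_isLeadExp_le {m : MonomialOrder σ} {G : Set (MvPolynomial σ K)}
    {h : MvPolynomial σ K} (hred : ReducesToZero m G h) {D : σ →₀ ℕ} (hD : IsLeadExp m h D) :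
    ∃ p ∈ G, ∃ e, IsLeadExp m p e ∧ e ≤ D := by
  classical
  obtain ⟨N, g, q, hgG, rfl, hstd⟩ := hred
  obtain ⟨i, -, hi⟩ := Finset.mem_biUnion.mp (support_sum hD.1)
  have hqg : q i * g i ≠ 0 := ne_zero_iff.mpr ⟨_, mem_support_iff.mp hi⟩
  have hdeg : m.degree (q i * g i) = D := m.toSyn.injective <|
    le_antisymm (hstd i _ (isLeadExp_iff.mpr ⟨hqg, rfl⟩) D hD) (m.le_degree hi)
  refine ⟨g i, hgG i, m.degree (g i), isLeadExp_iff.mpr ⟨right_ne_zero_of_mul hqg, rfl⟩, ?_⟩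
  rw [← hdeg, m.degree_mul' hqg]
  exact le_add_self

theorem support_subset_of_mem_support_X_mul_X_mul_X {R : Type*} [CommSemiring R] [Nontrivial R]
    {i j k : σ} {D : σ →₀ ℕ} (hD : D ∈ (X i * X j * X k : MvPolynomial σ R).support) :
    (D.support : Set σ) ⊆ {i, j, k} := by
  classical
  rw [X, X, X, monomial_mul, monomial_mul, one_mul, one_mul, support_monomial,
    if_neg one_ne_zero, Finset.mem_singleton] at hD
  subst hD
  intro x hx
  simp only [Finset.mem_coe, Finsupp.mem_support_iff, Finsupp.add_apply,
    Finsupp.single_apply] at hx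
  simp only [Set.mem_insert_iff, Set.mem_singleton_iff]
  split_ifs at hx <;> simp_all

theorem s_polynomial_of_sharing_binomials_general
    (m : MonomialOrder σ) (a b c d β γ δ : σ)
    (f g : MvPolynomial σ K)
    (hf : f = X a * X b - X c * X d) (hg : g = X b * X β - X γ * X δ)
    (G : Set (MvPolynomial σ K)) :
    X β * f - X a * g = X a * X γ * X δ - X β * X c * X d ∧
    (ReducesToZero m G (X β * f - X a * g) →
      ∀ D, IsLeadExp m (X β * f - X a * g) D →
        ∃ p ∈ G, ∃ e, IsLeadExp m p e ∧ (∀ i, e i ≤ D i) ∧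
          ((↑e.support ⊆ ({a, γ, δ} : Set σ)) ∨ (↑e.support ⊆ ({β, c, d} : Set σ)))) := by
  classical
  have hS : X β * f - X a * g = X a * X γ * X δ - X β * X c * X d := by
    rw [hf, hg]
    ring
  refine ⟨hS, fun hred D hD => ?_⟩
  obtain ⟨p, hp, e, he, heD⟩ := hred.exists_isLeadExp_le hD
  refine ⟨p, hp, e, he, heD, ?_⟩
  have hsupp : (e.support : Set σ) ⊆ D.support := Finset.coe_subset.mpr (Finsupp.support_mono heD)
  rw [hS] at hD
  rcases Finset.mem_union.mp (support_sub σ _ _ hD.1) with hD₁ | hD₂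
  · exact Or.inl (hsupp.trans (support_subset_of_mem_support_X_mul_X_mul_X hD₁))
  · exact Or.inr (hsupp.trans (support_subset_of_mem_support_X_mul_X_mul_X hD₂))

/-- S-polynomial computation for two inner 2-minors sharing the variable `x_b`:
`S(f,g) = x_a x_γ x_δ − x_β x_c x_d`, and if `S(f,g)` reduces to `0` modulo a set `G`
of quadratic binomials, then the initial monomial of `S(f,g)` is divisible by the
initial monomial of some element of `G` involving only variables among `{a,γ,δ}`
or among `{β,c,d}`. -/
theorem s_polynomial_of_sharing_binomials
    (m : MonomialOrder σ) (a b c d β γ δ : σ)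
    (hdistinct : ([a, b, c, d, β, γ, δ] : List σ).Nodup)
    (f g : MvPolynomial σ K)
    (hf : f = X a * X b - X c * X d) (hg : g = X b * X β - X γ * X δ)
    (hinf : IsLeadExp m f (Finsupp.single a 1 + Finsupp.single b 1))
    (hing : IsLeadExp m g (Finsupp.single b 1 + Finsupp.single β 1))
    (G : Set (MvPolynomial σ K))
    (hG : ∀ p ∈ G, ∃ d₁ d₂ : σ →₀ ℕ,
      (d₁.sum fun _ x => x) = 2 ∧ (d₂.sum fun _ x => x) = 2 ∧
      p = monomial d₁ (1 : K) - monomial d₂ 1) :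
    X β * f - X a * g = X a * X γ * X δ - X β * X c * X d ∧
    (ReducesToZero m G (X β * f - X a * g) →
      ∀ D, IsLeadExp m (X β * f - X a * g) D →
        ∃ p ∈ G, ∃ e, IsLeadExp m p e ∧ (∀ i, e i ≤ D i) ∧
          ((↑e.support ⊆ ({a, γ, δ} : Set σ)) ∨ (↑e.support ⊆ ({β, c, d} : Set σ)))) :=
  s_polynomial_of_sharing_binomials_general m a b c d β γ δ f g hf hg G
end

section
/- Let P be a closed path polyomino, i.e., a sequence of cells A₁,…,A_n, A_{n+1} with n > 5, A₁ = A_{n+1}, consecutive cells sharing an edge, all A₁,…,A_n distinct, and V(A_i) ∩ V(A_j) = ∅ whenever j ∉ {i−2, i−1, i, i+1, i+2} (indices mod n). Then |V(P)| = 2n, i.e., the number of vertices of P is exactly twice the number of cells. -/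
/-!
For a vertex `v`, the indices `i` with `v ∈ V(A i)` lie within cyclic distance 2 of each other,
and if `v ∈ V(A i) ∩ V(A (i + 2))` then the two steps of the path turn and `v ∈ V(A (i + 1))`.
So these indices form a short cyclic interval, and `v` has exactly one cell `A i` with
`v ∈ V(A i) \ V(A (i - 1))`. Hence `V(P)` is the disjoint union of the sets
`V(A i) \ V(A (i - 1))`, each of which has `4 - 2 = 2` elements.
-/

/-- The four corner vertices of the cell with lower-left corner `c`. -/
def cellVerts (c : ℤ × ℤ) : Set (ℤ × ℤ) :=
  {c, (c.1 + 1, c.2), (c.1, c.2 + 1), (c.1 + 1, c.2 + 1)}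

/-- Two cells share a common edge. -/
def AdjCells (c d : ℤ × ℤ) : Prop :=
  d - c = (1, 0) ∨ d - c = (-1, 0) ∨ d - c = (0, 1) ∨ d - c = (0, -1)

open Finset

def cellFinset (c : ℤ × ℤ) : Finset (ℤ × ℤ) :=
  {c, (c.1 + 1, c.2), (c.1, c.2 + 1), (c.1 + 1, c.2 + 1)}

lemma coe_cellFinset (c : ℤ × ℤ) : (cellFinset c : Set (ℤ × ℤ)) = cellVerts c := by
  simp [cellFinset, cellVerts]

lemma cellFinset_add (a c : ℤ × ℤ) :
    cellFinset (a + c) = (cellFinset c).map (addLeftEmbedding a) := by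
  simp [cellFinset, Prod.add_def, add_assoc]

lemma AdjCells.card_cellFinset_sdiff {a b : ℤ × ℤ} (h : AdjCells a b) :
    #(cellFinset b \ cellFinset a) = 2 := by
  obtain ⟨u, hu, rfl⟩ : ∃ u ∈ ({(1, 0), (-1, 0), (0, 1), (0, -1)} : Finset (ℤ × ℤ)), b = a + u :=
    ⟨b - a, by simpa [AdjCells] using h, by abel⟩
  rw [cellFinset_add, ← add_zero a, cellFinset_add, add_zero, ← Finset.map_sdiff, card_map]
  clear h
  revert u
  decide

lemma mem_cellVerts {v c : ℤ × ℤ} :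
    v ∈ cellVerts c ↔ c.1 ≤ v.1 ∧ v.1 ≤ c.1 + 1 ∧ c.2 ≤ v.2 ∧ v.2 ≤ c.2 + 1 := by
  obtain ⟨x, y⟩ := v
  simp only [cellVerts, Set.mem_insert_iff, Set.mem_singleton_iff, Prod.ext_iff]
  omega

lemma AdjCells.cellVerts_inter_subset {a b c : ℤ × ℤ} (hab : AdjCells a b) (hbc : AdjCells b c)
    (hac : a ≠ c) : cellVerts a ∩ cellVerts c ⊆ cellVerts b := by
  rintro v ⟨ha, hc⟩
  rw [mem_cellVerts] at *
  simp only [AdjCells, Prod.ext_iff, Prod.fst_sub, Prod.snd_sub, ne_eq] at hab hbc hac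
  omega

lemma ZMod.natCast_ne_zero_of_lt {n k : ℕ} (hk : 0 < k) (hkn : k < n) : (k : ZMod n) ≠ 0 := by
  rw [Ne, ZMod.natCast_eq_zero_iff]
  exact fun h => (Nat.le_of_dvd hk h).not_gt hkn

section CyclicWindow

variable {n : ℕ} {S : Set (ZMod n)}

lemma ZMod.exists_mem_sub_one_notMem
    (hnear : ∀ i ∈ S, ∀ j ∈ S, j ∈ ({i - 2, i - 1, i, i + 1, i + 2} : Set (ZMod n)))
    (hn : 5 < n) (hS : S.Nonempty) : ∃ i ∈ S, i - 1 ∉ S := by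
  by_contra! hclosed
  obtain ⟨i, hi⟩ := hS
  have h3 : i - 3 ∈ S := by
    convert hclosed _ (hclosed _ (hclosed i hi)) using 1
    ring
  have hne (k : ℕ) (hk : 0 < k ∧ k < 6) : (k : ZMod n) ≠ 0 :=
    ZMod.natCast_ne_zero_of_lt hk.1 (by omega)
  have h := hnear i hi _ h3
  simp only [Set.mem_insert_iff, Set.mem_singleton_iff] at h
  rcases h with h | h | h | h | h
  · exact hne 1 (by norm_num) (by push_cast; linear_combination -h)
  · exact hne 2 (by norm_num) (by push_cast; linear_combination -h)
  · exact hne 3 (by norm_num) (by push_cast; linear_combination -h)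
  · exact hne 4 (by norm_num) (by push_cast; linear_combination -h)
  · exact hne 5 (by norm_num) (by push_cast; linear_combination -h)

lemma ZMod.eq_of_mem_of_sub_one_notMem
    (hnear : ∀ i ∈ S, ∀ j ∈ S, j ∈ ({i - 2, i - 1, i, i + 1, i + 2} : Set (ZMod n)))
    (hfill : ∀ i ∈ S, i + 2 ∈ S → i + 1 ∈ S) {i j : ZMod n}
    (hi : i ∈ S) (hi' : i - 1 ∉ S) (hj : j ∈ S) (hj' : j - 1 ∉ S) : i = j := by
  rcases hnear i hi j hj with rfl | rfl | rfl | rfl | rfl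
  · exact absurd (by convert hfill _ hj (by simpa using hi) using 1; ring) hi'
  · exact absurd hj hi'
  · rfl
  · exact absurd (by simpa using hi) hj'
  · exact absurd (by convert hfill _ hi hj using 1; ring) hj'

end CyclicWindow

lemma ncard_iUnion_eq_sum_card_sdiff {α ι : Type*} [DecidableEq α] [Fintype ι] (s : ι → Finset α)
    (p : ι → ι) (h : ∀ x ∈ ⋃ i, (s i : Set α), ∃! i, x ∈ s i ∧ x ∉ s (p i)) :
    (⋃ i, (s i : Set α)).ncard = ∑ i, #(s i \ s (p i)) := by
  have hunion : (⋃ i, (s i : Set α)) = ↑(univ.biUnion fun i => s i \ s (p i)) := by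
    ext x
    refine ⟨fun hx => ?_, fun hx => ?_⟩
    · obtain ⟨i, hi, -⟩ := h x hx
      simpa using ⟨i, hi⟩
    · obtain ⟨i, -, hi⟩ := mem_biUnion.mp hx
      exact Set.mem_iUnion.mpr ⟨i, (mem_sdiff.mp hi).1⟩
  rw [hunion, Set.ncard_coe_finset, card_biUnion]
  intro i _ j _ hij
  refine disjoint_left.mpr fun x hxi hxj => hij ?_
  have hx : x ∈ ⋃ i, (s i : Set α) := Set.mem_iUnion.mpr ⟨i, (mem_sdiff.mp hxi).1⟩
  exact (h x hx).unique (mem_sdiff.mp hxi) (mem_sdiff.mp hxj)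

/-- A closed path polyomino with `n` cells `A 0, …, A (n-1)` (cyclically indexed by
`ZMod n`, encoding `A₁,…,A_n, A_{n+1} = A₁`): consecutive cells share an edge, all
cells are distinct, and cells at cyclic distance more than 2 share no vertex.
Then the number of vertices of the polyomino is exactly `2n`. -/
theorem closed_path_vertex_count (n : ℕ) (hn : 5 < n) (A : ZMod n → ℤ × ℤ)
    (hadj : ∀ i : ZMod n, AdjCells (A i) (A (i + 1)))
    (hinj : Function.Injective A)
    (hfar : ∀ i j : ZMod n, j ∉ ({i - 2, i - 1, i, i + 1, i + 2} : Set (ZMod n)) →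
      cellVerts (A i) ∩ cellVerts (A j) = ∅) :
    (⋃ i : ZMod n, cellVerts (A i)).ncard = 2 * n := by
  have : NeZero n := ⟨by omega⟩
  have h2 : (2 : ZMod n) ≠ 0 := by exact_mod_cast ZMod.natCast_ne_zero_of_lt two_pos (by omega)
  have hleft : ∀ v ∈ ⋃ i, (cellFinset (A i) : Set (ℤ × ℤ)),
      ∃! i, v ∈ cellFinset (A i) ∧ v ∉ cellFinset (A (i - 1)) := by
    intro v hv
    set S := {i | v ∈ cellVerts (A i)}
    simp only [← Finset.mem_coe, coe_cellFinset] at hv ⊢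
    have hnear : ∀ i ∈ S, ∀ j ∈ S, j ∈ ({i - 2, i - 1, i, i + 1, i + 2} : Set (ZMod n)) :=
      fun i hi j hj => by_contra fun hij => (hfar i j hij).subset ⟨hi, hj⟩
    have hfill : ∀ i ∈ S, i + 2 ∈ S → i + 1 ∈ S := fun i hi hi2 =>
      (hadj i).cellVerts_inter_subset (by simpa [add_assoc, one_add_one_eq_two] using hadj (i + 1))
        (hinj.ne fun h => h2 (by linear_combination -h)) ⟨hi, hi2⟩
    obtain ⟨i, hi, hi'⟩ := ZMod.exists_mem_sub_one_notMem hnear hn (Set.mem_iUnion.mp hv)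
    exact ⟨i, ⟨hi, hi'⟩, fun j hj =>
      ZMod.eq_of_mem_of_sub_one_notMem hnear hfill hj.1 hj.2 hi hi'⟩
  calc (⋃ i, cellVerts (A i)).ncard
      = (⋃ i, (cellFinset (A i) : Set (ℤ × ℤ))).ncard := by simp only [coe_cellFinset]
    _ = ∑ i, #(cellFinset (A i) \ cellFinset (A (i - 1))) :=
        ncard_iUnion_eq_sum_card_sdiff _ (· - 1) hleft
    _ = ∑ _i : ZMod n, 2 := sum_congr rfl fun i _ => by
        simpa using (hadj (i - 1)).card_cellFinset_sdiff
    _ = 2 * n := by simp [ZMod.card, mul_comm]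
end
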